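/- Let M be the Euclidean unit disk in ℝ² and ‖·‖ the Euclidean norm. For any two closed rays [a,a+b⟩ and [a,a+c⟩ with b, c nonzero and linearly independent, the Busemann angular bisector [a, a + b/‖b‖ + c/‖c‖⟩ coincides with the Glogovskij angular bisector, i.e., with the set of points in the convex hull of the two rays equidistant from them. -/
import Mathlib
set_option maxHeartbeats 1000000

/-- The closed ray from `a` in direction `b` in the Euclidean plane. -/
def Ray (a b : EuclideanSpace ℝ (Fin 2)) : Set (EuclideanSpace ℝ (Fin 2)) :=
  {q | ∃ t : ℝ, 0 ≤ t ∧ q = a + t • b}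

open Metric Real

local notation "E" => EuclideanSpace ℝ (Fin 2)
local notation "⟪" x ", " y "⟫" => @inner ℝ _ _ x y

lemma ray_nonempty (a b : E) : (Ray a b).Nonempty :=
  ⟨a, 0, le_refl _, by simp⟩

lemma ray_smul (a b : E) {r : ℝ} (hr : 0 < r) : Ray a (r • b) = Ray a b := by
  ext q
  constructor
  · rintro ⟨t, ht, rfl⟩
    exact ⟨t * r, by positivity, by rw [smul_smul]⟩
  · rintro ⟨t, ht, rfl⟩
    refine ⟨t / r, by positivity, ?_⟩
    rw [smul_smul, div_mul_cancel₀ _ hr.ne']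

/-- The convex hull of the union of two rays from `a` is the cone. -/
lemma hull_eq (a u v : E) :
    convexHull ℝ (Ray a u ∪ Ray a v)
      = {p | ∃ s t : ℝ, 0 ≤ s ∧ 0 ≤ t ∧ p = a + s • u + t • v} := by
  apply le_antisymm
  · apply convexHull_min
    · rintro q (⟨t, ht, rfl⟩ | ⟨t, ht, rfl⟩)
      · exact ⟨t, 0, ht, le_refl _, by simp⟩
      · exact ⟨0, t, le_refl _, ht, by simp⟩
    · rintro p ⟨s₁, t₁, hs₁, ht₁, rfl⟩ q ⟨s₂, t₂, hs₂, ht₂, rfl⟩ lam mu hlam hmu hsum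
      refine ⟨lam * s₁ + mu * s₂, lam * t₁ + mu * t₂, by positivity, by positivity, ?_⟩
      have h : mu = 1 - lam := by linarith
      subst h
      module
  · rintro p ⟨s, t, hs, ht, rfl⟩
    have h1 : a + (2 * s) • u ∈ convexHull ℝ (Ray a u ∪ Ray a v) :=
      subset_convexHull ℝ _ (Or.inl ⟨2 * s, by positivity, rfl⟩)
    have h2 : a + (2 * t) • v ∈ convexHull ℝ (Ray a u ∪ Ray a v) :=
      subset_convexHull ℝ _ (Or.inr ⟨2 * t, by positivity, rfl⟩)
    have := (convex_convexHull ℝ (Ray a u ∪ Ray a v)) h1 h2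
      (by norm_num : (0:ℝ) ≤ 1/2) (by norm_num : (0:ℝ) ≤ 1/2) (by norm_num)
    convert this using 1
    module

/-- Distance to a ray with unit direction. -/
lemma infDist_ray (a u : E) (hu : ‖u‖ = 1) (q : E) :
    infDist q (Ray a u)
      = Real.sqrt (‖q - a‖ ^ 2 - (max ⟪q - a, u⟫ 0) ^ 2) := by
  set w := q - a with hw
  obtain ⟨m, hm⟩ : ∃ m : ℝ, max ⟪w, u⟫ 0 = m := ⟨_, rfl⟩
  rw [hm]
  have hmnn : 0 ≤ m := hm ▸ le_max_right _ _
  have key : ∀ t : ℝ, ‖w - t • u‖ ^ 2 = ‖w‖ ^ 2 - 2 * t * ⟪w, u⟫ + t ^ 2 := by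
    intro t
    rw [norm_sub_sq_real, real_inner_smul_right, norm_smul, hu, Real.norm_eq_abs]
    rw [mul_one, sq_abs]
    ring
  have hge : ∀ t : ℝ, 0 ≤ t → ‖w‖ ^ 2 - m ^ 2 ≤ ‖w - t • u‖ ^ 2 := by
    intro t ht
    rw [key t]
    rcases le_or_gt 0 ⟪w, u⟫ with h | h
    · have : m = ⟪w, u⟫ := by rw [← hm, max_eq_left h]
      nlinarith [sq_nonneg (t - m)]
    · have : m = 0 := by rw [← hm, max_eq_right h.le]
      nlinarith
  have heq : ‖w - m • u‖ ^ 2 = ‖w‖ ^ 2 - m ^ 2 := by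
    rw [key m]
    rcases le_or_gt 0 ⟪w, u⟫ with h | h
    · have : m = ⟪w, u⟫ := by rw [← hm, max_eq_left h]
      rw [this]; ring
    · have : m = 0 := by rw [← hm, max_eq_right h.le]
      rw [this]; ring
  apply le_antisymm
  · have hmem : a + m • u ∈ Ray a u := ⟨m, hmnn, rfl⟩
    calc infDist q (Ray a u) ≤ dist q (a + m • u) := infDist_le_dist_of_mem hmem
      _ = ‖w - m • u‖ := by rw [dist_eq_norm]; congr 1; rw [hw]; abel
      _ = Real.sqrt (‖w - m • u‖ ^ 2) := (Real.sqrt_sq (norm_nonneg _)).symm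
      _ = Real.sqrt (‖w‖ ^ 2 - m ^ 2) := by rw [heq]
  · by_contra hlt
    push_neg at hlt
    obtain ⟨y, ⟨t, ht, rfl⟩, hd⟩ := (infDist_lt_iff (ray_nonempty a u)).1 hlt
    have h1 : dist q (a + t • u) = ‖w - t • u‖ := by
      rw [dist_eq_norm]; congr 1; rw [hw]; abel
    have h2 : Real.sqrt (‖w‖ ^ 2 - m ^ 2) ≤ ‖w - t • u‖ := by
      rw [← Real.sqrt_sq (norm_nonneg (w - t • u))]
      exact Real.sqrt_le_sqrt (hge t ht)
    rw [h1] at hd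
    linarith

lemma main_lemma (a u v : E) (hu : ‖u‖ = 1) (hv : ‖v‖ = 1)
    (hli : ∀ r : ℝ, r • u ≠ v) :
    Ray a (u + v) =
      {p ∈ convexHull ℝ (Ray a u ∪ Ray a v) |
        infDist p (Ray a u) = infDist p (Ray a v)} := by
  obtain ⟨γ, hγ⟩ : ∃ g : ℝ, ⟪u, v⟫ = g := ⟨_, rfl⟩
  have hγ' : ⟪v, u⟫ = γ := by rw [real_inner_comm]; exact hγ
  have hγ2 : γ ^ 2 < 1 := by
    have hcs : γ ^ 2 ≤ 1 := by
      have := real_inner_mul_inner_self_le u v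
      rw [real_inner_self_eq_norm_sq, real_inner_self_eq_norm_sq, hu, hv, hγ] at this
      nlinarith
    rcases lt_or_eq_of_le hcs with h | h
    · exact h
    · exfalso
      have hun : ‖u - γ • v‖ ^ 2 = 1 - γ ^ 2 := by
        rw [norm_sub_sq_real, real_inner_smul_right, hγ, norm_smul, hu, hv,
          Real.norm_eq_abs, mul_one, sq_abs]
        ring
      have hz : ‖u - γ • v‖ = 0 := by
        have h0 : ‖u - γ • v‖ ^ 2 = 0 := by rw [hun, ← h]; ring
        exact pow_eq_zero_iff two_ne_zero |>.1 h0
      have huv : u = γ • v := by rwa [norm_eq_zero, sub_eq_zero] at hz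
      apply hli γ
      rw [huv, smul_smul]
      have hγγ : γ * γ = 1 := by nlinarith
      rw [hγγ, one_smul]
  have hγgt : -1 < γ := by nlinarith
  have hγlt : γ < 1 := by nlinarith
  have hinner : ∀ s t : ℝ, ⟪s • u + t • v, u⟫ = s + t * γ ∧ ⟪s • u + t • v, v⟫ = s * γ + t := by
    intro s t
    constructor
    · rw [inner_add_left, real_inner_smul_left, real_inner_smul_left,
        real_inner_self_eq_norm_sq, hu, hγ']
      ring
    · rw [inner_add_left, real_inner_smul_left, real_inner_smul_left,
        real_inner_self_eq_norm_sq, hv, hγ]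
      ring
  have hnorm : ∀ s t : ℝ, ‖s • u + t • v‖ ^ 2 = s ^ 2 + 2 * s * t * γ + t ^ 2 := by
    intro s t
    rw [norm_add_sq_real, real_inner_smul_left, real_inner_smul_right, hγ,
      norm_smul, norm_smul, hu, hv, Real.norm_eq_abs, Real.norm_eq_abs,
      mul_one, mul_one, sq_abs, sq_abs]
    ring
  have hsub : ∀ (s t : ℝ), (a + s • u + t • v) - a = s • u + t • v := by
    intro s t; abel
  rw [hull_eq a u v]
  ext p
  simp only [Set.mem_setOf_eq, Set.mem_sep_iff]
  constructor
  · rintro ⟨t, ht, rfl⟩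
    have hrep : a + t • (u + v) = a + t • u + t • v := by module
    rw [hrep]
    refine ⟨⟨t, t, ht, ht, rfl⟩, ?_⟩
    rw [infDist_ray a u hu, infDist_ray a v hv, hsub]
    rw [(hinner t t).1, (hinner t t).2]
    ring_nf
  · rintro ⟨⟨s, t, hs, ht, rfl⟩, hdist⟩
    rw [infDist_ray a u hu, infDist_ray a v hv, hsub, (hinner s t).1, (hinner s t).2] at hdist
    obtain ⟨α, hα⟩ : ∃ x : ℝ, s + t * γ = x := ⟨_, rfl⟩
    obtain ⟨β, hβ⟩ : ∃ x : ℝ, s * γ + t = x := ⟨_, rfl⟩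
    rw [hα, hβ] at hdist
    obtain ⟨N, hNdef⟩ : ∃ x : ℝ, ‖s • u + t • v‖ ^ 2 = x := ⟨_, rfl⟩
    rw [hNdef] at hdist
    have hN : N = s ^ 2 + 2 * s * t * γ + t ^ 2 := by rw [← hNdef]; exact hnorm s t
    have hNnn : 0 ≤ N := by
      rw [← hNdef]; positivity
    have hCS1 : α ^ 2 ≤ N := by
      have := real_inner_mul_inner_self_le (s • u + t • v) u
      rw [real_inner_self_eq_norm_sq, real_inner_self_eq_norm_sq, hu, (hinner s t).1, hα,
        hNdef] at this
      nlinarith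
    have hCS2 : β ^ 2 ≤ N := by
      have := real_inner_mul_inner_self_le (s • u + t • v) v
      rw [real_inner_self_eq_norm_sq, real_inner_self_eq_norm_sq, hv, (hinner s t).2, hβ,
        hNdef] at this
      nlinarith
    have hnn1 : 0 ≤ N - (max α 0) ^ 2 := by
      rcases le_or_gt 0 α with h | h
      · rw [max_eq_left h]; nlinarith
      · rw [max_eq_right h.le]; nlinarith
    have hnn2 : 0 ≤ N - (max β 0) ^ 2 := by
      rcases le_or_gt 0 β with h | h
      · rw [max_eq_left h]; nlinarith
      · rw [max_eq_right h.le]; nlinarith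
    have hmax : (max α 0) ^ 2 = (max β 0) ^ 2 := by
      have h1 := Real.sq_sqrt hnn1
      have h2 := Real.sq_sqrt hnn2
      rw [hdist] at h1
      have h3 : N - (max α 0) ^ 2 = N - (max β 0) ^ 2 := h1.symm.trans h2
      linarith
    have contra : α ≤ 0 → β ≤ 0 → ¬ (α + β < 0) := by
      intro hA hB hAB
      rw [← hα, ← hβ] at hAB
      have hsum : (s + t) * (1 + γ) < 0 := by nlinarith
      have : 0 ≤ (s + t) * (1 + γ) := mul_nonneg (by linarith) (by linarith)
      linarith
    have hst : s = t := by
      rcases le_or_gt 0 α with hα0 | hα0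
      · rcases le_or_gt 0 β with hβ0 | hβ0
        · rw [max_eq_left hα0, max_eq_left hβ0] at hmax
          have hαβ : α = β := by nlinarith
          rw [← hα, ← hβ] at hαβ
          have hzero : (s - t) * (1 - γ) = 0 := by linear_combination hαβ
          rcases mul_eq_zero.1 hzero with h | h
          · linarith
          · linarith
        · exfalso
          rw [max_eq_right hβ0.le, max_eq_left hα0] at hmax
          have hA : α = 0 := by nlinarith
          exact contra hA.le hβ0.le (by linarith)
      · exfalso
        rw [max_eq_right hα0.le] at hmax
        have hsq : (max β 0) ^ 2 = 0 := by nlinarith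
        have hβ0 : max β 0 = 0 := (pow_eq_zero_iff two_ne_zero).1 hsq
        have hβle : β ≤ 0 := by
          by_contra h
          push_neg at h
          rw [max_eq_left h.le] at hβ0
          linarith
        exact contra hα0.le hβle (by linarith)
    subst hst
    exact ⟨s, hs, by module⟩

theorem stmt_16 (a b c : EuclideanSpace ℝ (Fin 2))
    (hb : b ≠ 0) (hc : c ≠ 0) (hbc : LinearIndependent ℝ ![b, c]) :
    Ray a ((‖b‖⁻¹ • b) + (‖c‖⁻¹ • c)) =
      {p ∈ convexHull ℝ (Ray a b ∪ Ray a c) |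
        Metric.infDist p (Ray a b) = Metric.infDist p (Ray a c)} := by
  have hbn : (0:ℝ) < ‖b‖ := norm_pos_iff.2 hb
  have hcn : (0:ℝ) < ‖c‖ := norm_pos_iff.2 hc
  have hu : ‖(‖b‖⁻¹ • b : E)‖ = 1 := norm_smul_inv_norm hb
  have hv : ‖(‖c‖⁻¹ • c : E)‖ = 1 := norm_smul_inv_norm hc
  have hrb : Ray a b = Ray a (‖b‖⁻¹ • b) := (ray_smul a b (by positivity)).symm
  have hrc : Ray a c = Ray a (‖c‖⁻¹ • c) := (ray_smul a c (by positivity)).symm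
  have hli : ∀ r : ℝ, r • (‖b‖⁻¹ • b : E) ≠ ‖c‖⁻¹ • c := by
    intro r hr
    rw [linearIndependent_fin2] at hbc
    have h2 : ∀ x : ℝ, x • c ≠ b := by
      intro x
      have := hbc.2 x
      simpa using this
    have hr0 : r ≠ 0 := by
      rintro rfl
      rw [zero_smul] at hr
      apply hc
      have h0 : (0 : E) = ‖c‖⁻¹ • c := hr
      rwa [eq_comm, smul_eq_zero, or_iff_right (inv_ne_zero hcn.ne')] at h0
    apply h2 (r⁻¹ * ‖b‖ * ‖c‖⁻¹)
    have h1 : (r * ‖b‖⁻¹) • b = ‖c‖⁻¹ • c := by rw [mul_smul]; exact hr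
    have h3 := congrArg (fun x : E => (r⁻¹ * ‖b‖) • x) h1
    simp only [smul_smul] at h3
    rw [show r⁻¹ * ‖b‖ * (r * ‖b‖⁻¹) = 1 by field_simp] at h3
    rw [one_smul] at h3
    exact h3.symm
  rw [hrb, hrc]
  exact main_lemma a _ _ hu hv hli
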